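/- arXiv:1509.02864 — 2 statements merged into one kernel-verified Lean document; each statement's English description precedes it below -/
import Mathlib

section
/- Let ξ : ℝ → ℂ be a continuously differentiable (C¹) function with ξ(θ + 2π) = ξ(θ) for all θ. Then the commutator F∘M(ξ) − M(ξ)∘F is a Hilbert–Schmidt operator on H; concretely, ∑_{k,l ∈ ℤ} |⟨e_k, (F∘M(ξ) − M(ξ)∘F) e_l⟩|² < ∞. -/
/-!
In the basis `e k`, `F` is diagonal with eigenvalue `sgn k = ±1`, and `M(ξ)` is the Toeplitz
matrix `⟨e k, M(ξ) e l⟩ = ξ̂(k - l)`. Hence the `(k, l)` entry of `F M(ξ) - M(ξ) F` is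
`(sgn k - sgn l) ξ̂(k - l)`, which vanishes unless `k` and `l` have opposite signs. For fixed
`m = k - l` there are at most `2|m|` such pairs, so the Hilbert–Schmidt sum is bounded by
`8 ∑ |m| |ξ̂(m)|² ≤ 8 ∑ m² |ξ̂(m)|²`, finite by Parseval applied to `ξ'`, as `ξ̂'(m) = i m ξ̂(m)`.
-/

open MeasureTheory
open scoped ENNReal

noncomputable section

instance fact_two_pi_pos : Fact (0 < 2 * Real.pi) := ⟨by positivity⟩

/-- The Hilbert space `H = L²(ℝ/2πℤ, ℂ)`, with inner product
`⟨ξ,η⟩ = (1/2π)∫₀^{2π} conj(ξ θ) η θ dθ` (i.e. `L²` of the normalized Haar measure on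
`ℝ/2πℤ`). -/
abbrev H : Type := MeasureTheory.Lp ℂ 2 (AddCircle.haarAddCircle (T := 2 * Real.pi))

/-- The Hilbert basis vector `e k = (θ ↦ exp (i k θ))` of `H`. -/
def e (k : ℤ) : H := fourierLp 2 k

/-- `H₊`, the closed subspace of `H` spanned by the `e k`, `k ≥ 0`. -/
def Hplus : Submodule ℂ H :=
  (Submodule.span ℂ (Set.range fun n : ℕ => e n)).topologicalClosure

instance : CompleteSpace Hplus :=
  (Submodule.isClosed_topologicalClosure _).completeSpace_coe

/-- `P₊`, the orthogonal projection of `H` onto `H₊` (as an operator `H → H`). -/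
def Pplus : H →L[ℂ] H := Hplus.subtypeL.comp Hplus.orthogonalProjectionOnto

/-- `F = P₊ - P₋` where `P₋ = 1 - P₊`. -/
def Fop : H →L[ℂ] H := Pplus - (1 - Pplus)

/-- `M` is the bounded operator on `H` of multiplication by the (`2π`-periodic)
function `q : ℝ → ℂ`. -/
def IsMulOp (q : ℝ → ℂ) (M : H →L[ℂ] H) : Prop :=
  ∀ ξ : H, ∀ᵐ θ : ℝ,
    (M ξ : AddCircle (2 * Real.pi) → ℂ) (θ : AddCircle (2 * Real.pi))
      = q θ * (ξ : AddCircle (2 * Real.pi) → ℂ) (θ : AddCircle (2 * Real.pi))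

open Real Complex

theorem fourierCoeffOn_eq_of_hasDerivAt_of_eq {a b : ℝ} (hab : a < b) {f f' : ℝ → ℂ} {n : ℤ}
    (hn : n ≠ 0) (hf : ∀ x ∈ Set.uIcc a b, HasDerivAt f (f' x) x)
    (hf' : IntervalIntegrable f' volume a b) (hfab : f a = f b) :
    fourierCoeffOn hab f n = (b - a) / (2 * π * I * n) * fourierCoeffOn hab f' n := by
  rw [fourierCoeffOn_of_hasDerivAt hab hn hf hf', hfab, sub_self, mul_zero, zero_sub]
  field_simp

theorem summable_sq_mul_sq_fourierCoeffOn {a b : ℝ} (hab : a < b) {f f' : ℝ → ℂ}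
    (hf : ∀ x ∈ Set.uIcc a b, HasDerivAt f (f' x) x)
    (hf' : MemLp f' 2 (volume.restrict (Set.Ioc a b))) (hfab : f a = f b) :
    Summable fun n : ℤ => (n : ℝ) ^ 2 * ‖fourierCoeffOn hab f n‖ ^ 2 := by
  have hint : IntervalIntegrable f' volume a b :=
    (intervalIntegrable_iff_integrableOn_Ioc_of_le hab.le).mpr (hf'.integrable one_le_two)
  refine .of_nonneg_of_le (fun n => by positivity) (fun n => ?_)
    ((hasSum_sq_fourierCoeffOn hab hf').summable.mul_left (((b - a) / (2 * π)) ^ 2))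
  rcases eq_or_ne n 0 with rfl | hn
  · simp only [Int.cast_zero, ne_eq, OfNat.ofNat_ne_zero, not_false_eq_true, zero_pow, zero_mul]
    positivity
  refine le_of_eq ?_
  rw [fourierCoeffOn_eq_of_hasDerivAt_of_eq hab hn hf hint hfab, ← ofReal_sub, norm_mul, norm_div]
  simp only [norm_mul, Complex.norm_ofNat, Complex.norm_real, norm_I, Complex.norm_intCast,
    Real.norm_eq_abs, abs_of_pos (sub_pos.mpr hab), abs_of_pos pi_pos]
  have : (n : ℝ) ≠ 0 := by exact_mod_cast hn
  field_simp
  rw [sq_abs]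
  ring

lemma Continuous.memLp_restrict_Ioc {E : Type*} [NormedAddCommGroup E] {f : ℝ → E}
    (hf : Continuous f) (p : ℝ≥0∞) (a b : ℝ) : MemLp f p (volume.restrict (Set.Ioc a b)) := by
  obtain ⟨C, hC⟩ := (isCompact_Icc (a := a) (b := b)).exists_bound_of_continuousOn hf.continuousOn
  exact .of_bound hf.aestronglyMeasurable.restrict C <| (ae_restrict_iff' measurableSet_Ioc).mpr <|
    ae_of_all _ fun x hx => hC x (Set.Ioc_subset_Icc_self hx)

/-- The eigenvalue of `F` on `e n`; unlike `Int.sign`, it is `1` at `n = 0`. -/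
def sgn (n : ℤ) : ℝ := if 0 ≤ n then 1 else -1

lemma sgn_add_eq_sgn_of_notMem_Ico {m l : ℤ} (hl : l ∉ Finset.Ico (-(m.natAbs : ℤ)) m.natAbs) :
    sgn (m + l) = sgn l := by
  rw [Finset.mem_Ico] at hl
  unfold sgn
  congr 1
  exact propext (by omega)

lemma sq_sgn_sub_sgn_le (k l : ℤ) : (sgn k - sgn l) ^ 2 ≤ 4 := by
  unfold sgn
  split_ifs <;> norm_num

def shearEquiv : ℤ × ℤ ≃ ℤ × ℤ where
  toFun p := (p.1 + p.2, p.2)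
  invFun p := (p.1 - p.2, p.2)
  left_inv p := by simp
  right_inv p := by simp

theorem summable_sq_sgn_sub_sgn_mul {c : ℤ → ℝ} (hc₀ : 0 ≤ c)
    (hc : Summable fun m => (m.natAbs : ℝ) * c m) :
    Summable fun kl : ℤ × ℤ => (sgn kl.1 - sgn kl.2) ^ 2 * c (kl.1 - kl.2) := by
  rw [← shearEquiv.summable_iff]
  have hfin (m : ℤ) : ∀ l ∉ Finset.Ico (-(m.natAbs : ℤ)) m.natAbs,
      (sgn (m + l) - sgn l) ^ 2 * c m = 0 := fun l hl => by
    rw [sgn_add_eq_sgn_of_notMem_Ico hl, sub_self, zero_pow two_ne_zero, zero_mul]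
  refine (summable_prod_of_nonneg fun p => mul_nonneg (sq_nonneg _) (hc₀ _)).mpr
    ⟨fun m => ?_, ?_⟩
  · simpa [shearEquiv] using summable_of_ne_finset_zero (hfin m)
  refine .of_nonneg_of_le (fun m => tsum_nonneg fun l => mul_nonneg (sq_nonneg _) (hc₀ _))
    (fun m => ?_) (hc.mul_left 8)
  simp only [shearEquiv, Equiv.coe_fn_mk, add_sub_cancel_right]
  rw [tsum_eq_sum (hfin m)]
  calc ∑ l ∈ Finset.Ico (-(m.natAbs : ℤ)) m.natAbs, (sgn (m + l) - sgn l) ^ 2 * c m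
      ≤ ∑ l ∈ Finset.Ico (-(m.natAbs : ℤ)) m.natAbs, 4 * c m :=
        Finset.sum_le_sum fun l _ => mul_le_mul_of_nonneg_right (sq_sgn_sub_sgn_le _ _) (hc₀ m)
    _ = 8 * ((m.natAbs : ℝ) * c m) := by
        rw [Finset.sum_const, Int.card_Ico, nsmul_eq_mul,
          show (m.natAbs - -m.natAbs : ℤ).toNat = 2 * m.natAbs by omega]
        push_cast
        ring

lemma inner_e_eq_fourierCoeff (g : H) (k : ℤ) :
    inner ℂ (e k) g = fourierCoeff (g : AddCircle (2 * π) → ℂ) k := by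
  rw [← fourierBasis_repr, HilbertBasis.repr_apply_apply, coe_fourierBasis]
  rfl

lemma ae_coe_of_ae_haarAddCircle {T : ℝ} [Fact (0 < T)] {p : AddCircle T → Prop}
    (h : ∀ᵐ x ∂AddCircle.haarAddCircle, p x) :
    ∀ᵐ θ : ℝ ∂volume.restrict (Set.Ioc 0 (0 + T)), p θ := by
  refine ae_of_ae_map (f := ((↑) : ℝ → AddCircle T)) (AddCircle.continuous_mk' T).aemeasurable ?_
  rw [(AddCircle.measurePreserving_mk T 0).map_eq, AddCircle.volume_eq_smul_haarAddCircle]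
  exact Measure.ae_smul_measure h _

lemma inner_e_apply_e_of_isMulOp {q : ℝ → ℂ} {M : H →L[ℂ] H} (hM : IsMulOp q M) (k l : ℤ) :
    inner ℂ (e k) (M (e l)) = fourierCoeffOn two_pi_pos q (k - l) := by
  rw [inner_e_eq_fourierCoeff, fourierCoeff_eq_intervalIntegral _ k 0, fourierCoeffOn_eq_integral]
  -- `rw`, not `simp`: `2 * π - 0` also occurs in the type `AddCircle (2 * π - 0)`
  rw [sub_zero, zero_add]
  congr 1
  refine intervalIntegral.integral_congr_ae ?_
  rw [Set.uIoc_of_le two_pi_pos.le, ← ae_restrict_iff' measurableSet_Ioc]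
  have hMl := ae_restrict_of_ae (s := Set.Ioc 0 (2 * π)) (hM (e l))
  have hel := ae_coe_of_ae_haarAddCircle (coeFn_fourierLp (T := 2 * π) 2 l)
  rw [zero_add] at hel
  filter_upwards [hMl, hel] with x hMx hex
  rw [hMx, e, hex, smul_eq_mul, smul_eq_mul, show -(k - l) = -k + l by ring, fourier_add]
  ring

lemma Pplus_eq_starProjection : Pplus = Hplus.starProjection := rfl

lemma e_mem_Hplus {n : ℤ} (hn : 0 ≤ n) : e n ∈ Hplus :=
  Submodule.le_topologicalClosure _ (Submodule.subset_span ⟨n.toNat, by simp [hn]⟩)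

lemma e_mem_Hplus_orthogonal {n : ℤ} (hn : n < 0) : e n ∈ Hplusᗮ := by
  rw [Hplus, Submodule.orthogonal_closure]
  refine (Submodule.isOrtho_span.mpr ?_).ge (Submodule.mem_span_singleton_self (e n))
  rintro _ ⟨m, rfl⟩ _ rfl
  exact orthonormal_fourier.2 (by omega)

lemma Fop_e (n : ℤ) : Fop (e n) = (sgn n : ℂ) • e n := by
  have hF : Fop (e n) = (2 : ℂ) • Pplus (e n) - e n := by
    simp only [Fop, sub_apply, one_apply_eq_self, two_smul]
    abel
  rw [hF, Pplus_eq_starProjection, sgn]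
  split_ifs with hn
  · rw [Submodule.starProjection_eq_self_iff.mpr (e_mem_Hplus hn)]
    module
  · rw [(Hplus.starProjection_apply_eq_zero_iff).mpr (e_mem_Hplus_orthogonal (not_le.mp hn))]
    module

lemma isSelfAdjoint_Fop : IsSelfAdjoint Fop := by
  have hP : IsSelfAdjoint Pplus := isSelfAdjoint_starProjection Hplus
  exact hP.sub ((IsSelfAdjoint.one _).sub hP)

lemma inner_e_commutator_Fop (A : H →L[ℂ] H) (k l : ℤ) :
    inner ℂ (e k) ((Fop.comp A - A.comp Fop) (e l)) =
      ((sgn k - sgn l : ℝ) : ℂ) * inner ℂ (e k) (A (e l)) := by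
  have hF (x y : H) : inner ℂ x (Fop y) = inner ℂ (Fop x) y :=
    (isSelfAdjoint_Fop.isSymmetric x y).symm
  rw [sub_apply, inner_sub_right, ContinuousLinearMap.comp_apply, hF,
    ContinuousLinearMap.comp_apply, Fop_e, Fop_e, map_smul, inner_smul_left, inner_smul_right,
    conj_ofReal]
  push_cast
  ring

theorem stmt_1 (ξ : ℝ → ℂ) (hper : ∀ θ, ξ (θ + 2 * Real.pi) = ξ θ)
    (hC1 : ContDiff ℝ 1 ξ) (M : H →L[ℂ] H) (hM : IsMulOp ξ M) :
    Summable (fun kl : ℤ × ℤ =>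
      ‖(inner ℂ (e kl.1) ((Fop.comp M - M.comp Fop) (e kl.2)) : ℂ)‖ ^ 2) := by
  set c : ℤ → ℝ := fun m => ‖fourierCoeffOn two_pi_pos ξ m‖ ^ 2
  have hentry (k l : ℤ) : ‖inner ℂ (e k) ((Fop.comp M - M.comp Fop) (e l))‖ ^ 2 =
      (sgn k - sgn l) ^ 2 * c (k - l) := by
    rw [inner_e_commutator_Fop, inner_e_apply_e_of_isMulOp hM, norm_mul, mul_pow, norm_real,
      Real.norm_eq_abs, sq_abs]
  have hderiv : Summable fun m : ℤ => (m : ℝ) ^ 2 * c m :=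
    summable_sq_mul_sq_fourierCoeffOn two_pi_pos
      (fun x _ => (hC1.differentiable one_ne_zero x).hasDerivAt)
      ((hC1.continuous_deriv le_rfl).memLp_restrict_Ioc 2 0 (2 * π)) (by simpa using (hper 0).symm)
  have hc : Summable fun m : ℤ => (m.natAbs : ℝ) * c m :=
    hderiv.of_nonneg_of_le (fun m => by positivity) fun m =>
      mul_le_mul_of_nonneg_right (by rw [Nat.cast_natAbs]; exact_mod_cast Int.natAbs_le_self_sq m)
        (by positivity)
  exact (summable_sq_sgn_sub_sgn_mul (fun m => by positivity) hc).congr fun kl =>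
    (hentry kl.1 kl.2).symm

end
end

section
/- Let α : ℝ → ℂ be a smooth 2π-periodic function whose Fourier coefficients satisfy α̂(k) = 0 for all k < 0, and let P₀ : H₊ → H₊ be the orthogonal projection onto ℂ·e₀. Define A : H₊ → H₊ by A = P₀∘T(e^{−α}) − T(e^α)∘P₀∘T(e^{−α}). Then: (a) A e_n = 0 for every n ≥ 1, so A has rank at most one; and (b) 1 + ⟨e₀, A e₀⟩ = exp(−α̂(0)). (Consequently the Fredholm determinant det(1 + A), which equals 1 + tr A for a rank-one operator, equals exp(−α̂(0)); this computes the Connes–Karoubi character on the Steinberg symbol {z, e^α}.) -/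
open MeasureTheory
open scoped ENNReal

noncomputable section

/-- The basis vector `e n`, `n ≥ 0`, as an element of `H₊`. -/
def eplus (n : ℕ) : Hplus :=
  ⟨e n, Submodule.le_topologicalClosure _ (Submodule.subset_span ⟨n, rfl⟩)⟩

/-- The Toeplitz operator `T(f) : H₊ → H₊`, `ξ ↦ P₊(f·ξ)`, associated to the
operator `M` of multiplication by `f` on `H`. -/
def Toep (M : H →L[ℂ] H) : Hplus →L[ℂ] Hplus :=
  Hplus.orthogonalProjectionOnto.comp (M.comp Hplus.subtypeL)

/-- The `k`-th Fourier coefficient `q̂(k) = (1/2π) ∫₀^{2π} q(θ) e^{-ikθ} dθ`. -/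
def fc (q : ℝ → ℂ) (k : ℤ) : ℂ :=
  (1 / (2 * (Real.pi : ℂ))) *
    ∫ θ in (0 : ℝ)..(2 * Real.pi), q θ * Complex.exp (-(Complex.I * (k : ℂ) * (θ : ℂ)))

/-- The orthogonal projection of `H₊` onto the line `ℂ·e₀` (as an operator `H₊ → H₊`). -/
def P0 : Hplus →L[ℂ] Hplus :=
  (ℂ ∙ eplus 0).subtypeL.comp (ℂ ∙ eplus 0).orthogonalProjectionOnto

namespace CKaux

open Complex
open scoped Real ComplexConjugate

variable {T : ℝ} [hT : Fact (0 < T)]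

lemma fourierCoeff_congr' {f g : AddCircle T → ℂ}
    (h : f =ᵐ[AddCircle.haarAddCircle] g) (k : ℤ) :
    fourierCoeff f k = fourierCoeff g k := by
  unfold fourierCoeff
  exact integral_congr_ae (h.mono fun t ht => by simp only []; rw [ht])

lemma fourierCoeff_neg' (f : AddCircle T → ℂ) (k : ℤ) :
    fourierCoeff (fun t => -f t) k = -fourierCoeff f k := by
  unfold fourierCoeff
  simp [smul_neg, integral_neg]

lemma fourierCoeff_mul_fourier (w : AddCircle T → ℂ) (n k : ℤ) :
    fourierCoeff (fun t => w t * fourier n t) k = fourierCoeff w (k - n) := by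
  unfold fourierCoeff
  congr 1
  ext t
  have h1 : (fourier (-(k - n)) t : ℂ) = fourier (-k) t * fourier n t := by
    have : -(k - n) = -k + n := by ring
    rw [this, fourier_add]
  rw [smul_eq_mul, smul_eq_mul, h1]
  ring

lemma fourierCoeff_conj_mul_fourier (u : AddCircle T → ℂ) (k j : ℤ) :
    fourierCoeff (fun t => (starRingEnd ℂ) (u t) * fourier k t) j
      = (starRingEnd ℂ) (fourierCoeff u (k - j)) := by
  unfold fourierCoeff
  rw [← integral_conj]
  congr 1
  ext t
  have h1 : (starRingEnd ℂ) ((fourier (-(k - j)) t : ℂ) • u t)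
      = fourier (k - j) t * (starRingEnd ℂ) (u t) := by
    rw [smul_eq_mul, map_mul]
    congr 1
    rw [fourier_neg, Complex.conj_conj]
  rw [h1, smul_eq_mul]
  have h2 : (fourier (k - j) t : ℂ) = fourier (-j) t * fourier k t := by
    have : k - j = -j + k := by ring
    rw [this, fourier_add]
  rw [h2]
  ring

lemma fourierCoeff_one (k : ℤ) :
    fourierCoeff (fun _ : AddCircle T => (1 : ℂ)) k = if k = 0 then 1 else 0 := by
  unfold fourierCoeff
  simp only [smul_eq_mul, mul_one]
  rcases eq_or_ne k 0 with rfl | hk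
  · simp only [neg_zero, if_pos rfl]
    have : ∀ t : AddCircle T, (fourier 0 t : ℂ) = 1 := fun t => fourier_zero
    rw [integral_congr_ae (Filter.Eventually.of_forall this)]
    simp
  · rw [if_neg hk]
    exact integral_eq_zero_of_add_right_eq_neg
      (fourier_add_half_inv_index (neg_ne_zero.mpr hk) hT.out)

lemma fourierCoeff_mul (u v : C(AddCircle T, ℂ)) (k : ℤ) :
    fourierCoeff (fun t => u t * v t) k
      = ∑' j : ℤ, fourierCoeff (⇑u) (k - j) * fourierCoeff (⇑v) j := by
  classical
  set μ := (AddCircle.haarAddCircle : Measure (AddCircle T)) with hμ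
  set w : C(AddCircle T, ℂ) := star u * fourier k with hw
  have hwfun : ⇑w = fun t => (starRingEnd ℂ) (u t) * fourier k t := by
    funext t; simp [hw]
  set x : Lp ℂ 2 μ := ContinuousMap.toLp (E := ℂ) 2 μ ℂ w with hx
  set y : Lp ℂ 2 μ := ContinuousMap.toLp (E := ℂ) 2 μ ℂ v with hy
  have hxcoe : ⇑x =ᵐ[μ] ⇑w := ContinuousMap.coeFn_toLp μ w
  have hycoe : ⇑y =ᵐ[μ] ⇑v := ContinuousMap.coeFn_toLp μ v
  have hrx : ∀ j : ℤ, fourierBasis.repr x j = (starRingEnd ℂ) (fourierCoeff (⇑u) (k - j)) := by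
    intro j
    rw [fourierBasis_repr, fourierCoeff_congr' hxcoe, hwfun, fourierCoeff_conj_mul_fourier]
  have hry : ∀ j : ℤ, fourierBasis.repr y j = fourierCoeff (⇑v) j := by
    intro j
    rw [fourierBasis_repr, fourierCoeff_congr' hycoe]
  have hinner : (inner ℂ x y : ℂ) = fourierCoeff (fun t => u t * v t) k := by
    rw [hx, hy, ContinuousMap.inner_toLp]
    unfold fourierCoeff
    congr 1
    funext t
    have : (starRingEnd ℂ) (w t) = fourier (-k) t * u t := by
      simp only [hw, ContinuousMap.mul_apply, ContinuousMap.star_apply]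
      rw [map_mul]
      simp only [Complex.star_def, Complex.conj_conj]
      rw [← fourier_neg]
      ring
    rw [this, smul_eq_mul]
    ring
  have hP := fourierBasis.tsum_inner_mul_inner x y
  rw [hinner] at hP
  rw [← hP]
  apply tsum_congr
  intro j
  have h1 : (inner ℂ (fourierBasis (T := T) j) y : ℂ) = fourierBasis.repr y j :=
    (fourierBasis.repr_apply_apply y j).symm
  have h2 : (inner ℂ x (fourierBasis (T := T) j) : ℂ)
      = (starRingEnd ℂ) (fourierBasis.repr x j) := by
    rw [← inner_conj_symm, fourierBasis.repr_apply_apply]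
  rw [h1, h2, hrx, hry, Complex.conj_conj]

lemma fourierCoeff_pows (u : C(AddCircle T, ℂ))
    (h : ∀ k : ℤ, k < 0 → fourierCoeff (⇑u) k = 0) :
    ∀ m : ℕ, (∀ k : ℤ, k < 0 → fourierCoeff (⇑(u ^ m)) k = 0)
      ∧ fourierCoeff (⇑(u ^ m)) 0 = (fourierCoeff (⇑u) 0) ^ m := by
  intro m
  induction m with
  | zero =>
    have h0 : ⇑(u ^ 0) = fun _ : AddCircle T => (1 : ℂ) := by
      funext t; simp
    constructor
    · intro k hk
      rw [h0, fourierCoeff_one, if_neg hk.ne]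
    · rw [h0, fourierCoeff_one, if_pos rfl, pow_zero]
  | succ m ih =>
    have hm : ∀ k : ℤ, fourierCoeff (⇑(u ^ (m + 1))) k
        = ∑' j : ℤ, fourierCoeff (⇑u) (k - j) * fourierCoeff (⇑(u ^ m)) j := by
      intro k
      have : ⇑(u ^ (m + 1)) = fun t => u t * (u ^ m) t := by
        funext t
        rw [pow_succ]
        simp [mul_comm]
      rw [this, fourierCoeff_mul]
    constructor
    · intro k hk
      rw [hm k]
      have hz : ∀ j : ℤ, fourierCoeff (⇑u) (k - j) * fourierCoeff (⇑(u ^ m)) j = 0 := by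
        intro j
        rcases lt_or_ge j 0 with hj | hj
        · rw [ih.1 j hj, mul_zero]
        · rw [h (k - j) (by omega), zero_mul]
      calc (∑' j : ℤ, fourierCoeff (⇑u) (k - j) * fourierCoeff (⇑(u ^ m)) j)
          = ∑' _ : ℤ, (0 : ℂ) := tsum_congr hz
        _ = 0 := tsum_zero
    · rw [hm 0]
      rw [tsum_eq_single (0 : ℤ) ?_]
      · rw [ih.2, zero_sub, neg_zero, pow_succ, mul_comm]
      · intro j hj
        rcases lt_or_ge j 0 with hjl | hjl
        · rw [ih.1 j hjl, mul_zero]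
        · have : (0 : ℤ) - j < 0 := by omega
          rw [h _ this, zero_mul]

lemma fourierCoeff_cexp (u : C(AddCircle T, ℂ))
    (h : ∀ k : ℤ, k < 0 → fourierCoeff (⇑u) k = 0) :
    (∀ k : ℤ, k < 0 → fourierCoeff (fun t => Complex.exp (u t)) k = 0) ∧
      fourierCoeff (fun t => Complex.exp (u t)) 0
        = Complex.exp (fourierCoeff (⇑u) 0) := by
  set μ := (AddCircle.haarAddCircle : Measure (AddCircle T)) with hμ
  have key : ∀ k : ℤ, fourierCoeff (fun t => Complex.exp (u t)) k
      = ∑' m : ℕ, ((m.factorial : ℂ))⁻¹ * fourierCoeff (⇑(u ^ m)) k := by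
    intro k
    have hexp : ∀ z : ℂ, Complex.exp z = ∑' m : ℕ, z ^ m / (m.factorial : ℂ) := by
      intro z
      rw [Complex.exp_eq_exp_ℂ, NormedSpace.exp_eq_tsum_div]
    have hpt : ∀ t : AddCircle T, (fourier (-k) t : ℂ) • Complex.exp (u t)
        = ∑' m : ℕ, (fourier (-k) t : ℂ) * (u t ^ m / (m.factorial : ℂ)) := by
      intro t
      rw [smul_eq_mul, hexp (u t), ← tsum_mul_left]
    have hmeas : ∀ m : ℕ, AEStronglyMeasurable
        (fun t : AddCircle T => (fourier (-k) t : ℂ) * (u t ^ m / (m.factorial : ℂ))) μ := by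
      intro m
      exact ((fourier (-k)).continuous.mul
        ((u.continuous.pow m).div_const _)).aestronglyMeasurable
    have hbound : ∀ (m : ℕ) (t : AddCircle T),
        ‖(fourier (-k) t : ℂ) * (u t ^ m / (m.factorial : ℂ))‖
          ≤ ‖u‖ ^ m / (m.factorial : ℝ) := by
      intro m t
      rw [norm_mul, norm_div, norm_pow]
      have h1 : ‖(fourier (-k) t : ℂ)‖ = 1 := by
        rw [fourier_apply]
        exact Circle.norm_coe _
      rw [h1, one_mul]
      have h2 : ‖u t‖ ≤ ‖u‖ := u.norm_coe_le_norm t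
      have h3 : ‖u t‖ ^ m ≤ ‖u‖ ^ m := pow_le_pow_left₀ (norm_nonneg _) h2 m
      have h4 : ‖((m.factorial : ℂ))‖ = (m.factorial : ℝ) := by
        simp
      rw [h4]
      exact div_le_div_of_nonneg_right h3 (by positivity)
    have hfin : (∑' m : ℕ,
        ∫⁻ t, ‖(fourier (-k) t : ℂ) * (u t ^ m / (m.factorial : ℂ))‖₊ ∂μ) ≠ ∞ := by
      have hle : ∀ m : ℕ,
          (∫⁻ t, ‖(fourier (-k) t : ℂ) * (u t ^ m / (m.factorial : ℂ))‖₊ ∂μ)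
          ≤ ENNReal.ofReal (‖u‖ ^ m / (m.factorial : ℝ)) := by
        intro m
        calc (∫⁻ t, ‖(fourier (-k) t : ℂ) * (u t ^ m / (m.factorial : ℂ))‖₊ ∂μ)
            ≤ ∫⁻ _, ENNReal.ofReal (‖u‖ ^ m / (m.factorial : ℝ)) ∂μ := by
              apply lintegral_mono
              intro t
              simp only []
              rw [← enorm_eq_nnnorm, ← ofReal_norm]
              exact ENNReal.ofReal_le_ofReal (hbound m t)
          _ = ENNReal.ofReal (‖u‖ ^ m / (m.factorial : ℝ)) := by
              rw [lintegral_const, measure_univ, mul_one]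
      refine ne_of_lt (lt_of_le_of_lt (ENNReal.tsum_le_tsum hle) ?_)
      rw [← ENNReal.ofReal_tsum_of_nonneg (fun m => by positivity)
        (Real.summable_pow_div_factorial ‖u‖)]
      exact ENNReal.ofReal_lt_top
    have hswap := integral_tsum (μ := μ) hmeas hfin
    unfold fourierCoeff
    calc (∫ t, (fourier (-k) t : ℂ) • Complex.exp (u t) ∂μ)
        = ∫ t, ∑' m : ℕ, (fourier (-k) t : ℂ) * (u t ^ m / (m.factorial : ℂ)) ∂μ := by
          exact integral_congr_ae (Filter.Eventually.of_forall hpt)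
      _ = ∑' m : ℕ, ∫ t, (fourier (-k) t : ℂ) * (u t ^ m / (m.factorial : ℂ)) ∂μ := hswap
      _ = ∑' m : ℕ, ((m.factorial : ℂ))⁻¹ * ∫ t, (fourier (-k) t : ℂ) • ((u ^ m) t) ∂μ := by
          apply tsum_congr
          intro m
          rw [← integral_const_mul ((m.factorial : ℂ))⁻¹]
          apply integral_congr_ae
          apply Filter.Eventually.of_forall
          intro t
          simp only [smul_eq_mul, ContinuousMap.pow_apply]
          rw [div_eq_mul_inv]
          ring
  constructor
  · intro k hk
    rw [key k]
    have hz : ∀ m : ℕ, ((m.factorial : ℂ))⁻¹ * fourierCoeff (⇑(u ^ m)) k = 0 := by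
      intro m
      rw [(fourierCoeff_pows u h m).1 k hk, mul_zero]
    calc (∑' m : ℕ, ((m.factorial : ℂ))⁻¹ * fourierCoeff (⇑(u ^ m)) k)
        = ∑' _ : ℕ, (0 : ℂ) := tsum_congr hz
      _ = 0 := tsum_zero
  · rw [key 0]
    have hz : ∀ m : ℕ, ((m.factorial : ℂ))⁻¹ * fourierCoeff (⇑(u ^ m)) 0
        = ((m.factorial : ℂ))⁻¹ * (fourierCoeff (⇑u) 0) ^ m := by
      intro m
      rw [(fourierCoeff_pows u h m).2]
    rw [tsum_congr hz]
    rw [Complex.exp_eq_exp_ℂ, NormedSpace.exp_eq_tsum ℂ]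
    apply tsum_congr
    intro m
    rw [smul_eq_mul]

lemma periodic_lift_continuous {q : ℝ → ℂ} (hq : Function.Periodic q (2 * Real.pi))
    (hc : Continuous q) : Continuous hq.lift := by
  have hcomp : hq.lift ∘ ((↑) : ℝ → AddCircle (2 * Real.pi)) = q :=
    funext fun x => hq.lift_coe x
  have hc2 : Continuous (hq.lift ∘ ((↑) : ℝ → AddCircle (2 * Real.pi))) := by
    rw [hcomp]; exact hc
  exact isQuotientMap_quotient_mk'.continuous_iff.mpr hc2

lemma fc_eq (q : ℝ → ℂ) (hq : Function.Periodic q (2 * Real.pi)) (k : ℤ) :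
    fc q k = fourierCoeff hq.lift k := by
  rw [fourierCoeff_eq_intervalIntegral hq.lift k 0, zero_add, fc]
  have hint : Set.EqOn
      (fun x : ℝ => q x * Complex.exp (-(Complex.I * (k : ℂ) * (x : ℂ))))
      (fun x : ℝ => (fourier (-k) (x : AddCircle (2 * Real.pi)) : ℂ)
        • hq.lift (x : AddCircle (2 * Real.pi)))
      (Set.uIcc 0 (2 * Real.pi)) := by
    intro x _
    simp only []
    have hpi : ((Real.pi : ℂ)) ≠ 0 := Complex.ofReal_ne_zero.mpr Real.pi_ne_zero
    have harg : 2 * (Real.pi : ℂ) * Complex.I * ((-k : ℤ) : ℂ) * (x : ℂ)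
          / ((2 * Real.pi : ℝ) : ℂ)
        = -(Complex.I * (k : ℂ) * (x : ℂ)) := by
      push_cast
      field_simp
    rw [smul_eq_mul, hq.lift_coe, fourier_coe_apply, harg, mul_comm]
  rw [intervalIntegral.integral_congr hint, Complex.real_smul]
  congr 1
  push_cast
  ring

lemma mulOp_ae {q : ℝ → ℂ} {Q : AddCircle (2 * Real.pi) → ℂ} (hQc : Continuous Q)
    (hQq : ∀ θ : ℝ, Q (θ : AddCircle (2 * Real.pi)) = q θ) {M : H →L[ℂ] H}
    (hM : IsMulOp q M) (ξ : H) :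
    (⇑(M ξ) : AddCircle (2 * Real.pi) → ℂ)
      =ᵐ[AddCircle.haarAddCircle]
        fun y => Q y * (ξ : AddCircle (2 * Real.pi) → ℂ) y := by
  set s : Set (AddCircle (2 * Real.pi)) :=
    {y | ¬ ((M ξ : AddCircle (2 * Real.pi) → ℂ) y
      = Q y * (ξ : AddCircle (2 * Real.pi) → ℂ) y)} with hs
  have hsm : MeasurableSet s := by
    have h1 : StronglyMeasurable (⇑(M ξ) : AddCircle (2 * Real.pi) → ℂ) :=
      Lp.stronglyMeasurable _
    have h2 : StronglyMeasurable
        (fun y => Q y * (ξ : AddCircle (2 * Real.pi) → ℂ) y) :=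
      hQc.stronglyMeasurable.mul (Lp.stronglyMeasurable ξ)
    exact (h1.measurableSet_eq_fun h2).compl
  have hnull : (volume : Measure ℝ) (((↑) : ℝ → AddCircle (2 * Real.pi)) ⁻¹' s) = 0 := by
    have h := hM ξ
    rw [MeasureTheory.ae_iff] at h
    apply measure_mono_null _ h
    intro θ hθ
    simp only [Set.mem_preimage, hs, Set.mem_setOf_eq] at hθ ⊢
    rw [hQq θ] at hθ
    exact hθ
  have hvol : (volume : Measure (AddCircle (2 * Real.pi))) s = 0 := by
    have hmp := AddCircle.measurePreserving_mk (T := 2 * Real.pi) 0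
    rw [← hmp.measure_preimage hsm.nullMeasurableSet]
    exact le_antisymm ((Measure.restrict_apply_le _ _).trans hnull.le) zero_le
  have hhaar : (AddCircle.haarAddCircle : Measure (AddCircle (2 * Real.pi))) s = 0 := by
    rw [AddCircle.volume_eq_smul_haarAddCircle] at hvol
    simp only [Measure.smul_apply, smul_eq_mul] at hvol
    rcases mul_eq_zero.mp hvol with h | h
    · exfalso
      rw [ENNReal.ofReal_eq_zero] at h
      have := Real.pi_pos
      linarith
    · exact h
  rw [Filter.EventuallyEq, MeasureTheory.ae_iff]
  exact hhaar

end CKaux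

theorem stmt_11 (α : ℝ → ℂ) (hα : ContDiff ℝ (⊤ : ℕ∞) α)
    (hαper : ∀ θ, α (θ + 2 * Real.pi) = α θ)
    (hcoef : ∀ k : ℤ, k < 0 → fc α k = 0)
    (MA MAinv : H →L[ℂ] H)
    (hMA : IsMulOp (fun θ => Complex.exp (α θ)) MA)
    (hMAinv : IsMulOp (fun θ => Complex.exp (-α θ)) MAinv)
    (A : Hplus →L[ℂ] Hplus)
    (hA : A = P0.comp (Toep MAinv) - (Toep MA).comp (P0.comp (Toep MAinv))) :
    (∀ n : ℕ, 1 ≤ n → A (eplus n) = 0) ∧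
    1 + (inner ℂ (eplus 0) (A (eplus 0)) : ℂ) = Complex.exp (-fc α 0) := by
  classical
  open CKaux in
  -- Fourier-analytic setup
  have hperα : Function.Periodic α (2 * Real.pi) := hαper
  set aL : AddCircle (2 * Real.pi) → ℂ := hperα.lift with haL
  have haLc : Continuous aL := CKaux.periodic_lift_continuous hperα hα.continuous
  have hfcL : ∀ k : ℤ, fc α k = fourierCoeff aL k := fun k => CKaux.fc_eq α hperα k
  set aC : C(AddCircle (2 * Real.pi), ℂ) := ⟨aL, haLc⟩ with haC
  set naC : C(AddCircle (2 * Real.pi), ℂ) := ⟨fun y => -aL y, haLc.neg⟩ with hnaC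
  have hca : ∀ k : ℤ, k < 0 → fourierCoeff (⇑aC) k = 0 := by
    intro k hk
    rw [show ⇑aC = aL from rfl, ← hfcL k]
    exact hcoef k hk
  have hcna : ∀ k : ℤ, k < 0 → fourierCoeff (⇑naC) k = 0 := by
    intro k hk
    rw [show ⇑naC = fun y => -aL y from rfl, CKaux.fourierCoeff_neg', ← hfcL k,
      hcoef k hk, neg_zero]
  obtain ⟨hgneg, hg0⟩ := CKaux.fourierCoeff_cexp aC hca
  obtain ⟨hfneg, hf0⟩ := CKaux.fourierCoeff_cexp naC hcna
  set Qf : AddCircle (2 * Real.pi) → ℂ := fun y => Complex.exp (-aL y) with hQf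
  set Qg : AddCircle (2 * Real.pi) → ℂ := fun y => Complex.exp (aL y) with hQg
  have hQfC : Continuous Qf := Complex.continuous_exp.comp haLc.neg
  have hQgC : Continuous Qg := Complex.continuous_exp.comp haLc
  have hQfq : ∀ θ : ℝ, Qf (θ : AddCircle (2 * Real.pi)) = Complex.exp (-α θ) := by
    intro θ
    simp only [hQf]
    rw [haL, hperα.lift_coe]
  have hQgq : ∀ θ : ℝ, Qg (θ : AddCircle (2 * Real.pi)) = Complex.exp (α θ) := by
    intro θ
    simp only [hQg]
    rw [haL, hperα.lift_coe]
  have hfneg' : ∀ k : ℤ, k < 0 → fourierCoeff Qf k = 0 := by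
    intro k hk
    have : Qf = fun t => Complex.exp (naC t) := rfl
    rw [this]
    exact hfneg k hk
  have hf0' : fourierCoeff Qf 0 = Complex.exp (-fc α 0) := by
    have h1 : Qf = fun t => Complex.exp (naC t) := rfl
    rw [h1, hf0, show ⇑naC = fun y => -aL y from rfl, CKaux.fourierCoeff_neg', ← hfcL 0]
  have hg0' : fourierCoeff Qg 0 = Complex.exp (fc α 0) := by
    have h1 : Qg = fun t => Complex.exp (aC t) := rfl
    rw [h1, hg0, show ⇑aC = aL from rfl, ← hfcL 0]
  -- Hilbert space bookkeeping
  have inner_e : ∀ (k : ℤ) (ζ : H), (inner ℂ (e k) ζ : ℂ) = fourierCoeff (⇑ζ) k := by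
    intro k ζ
    have hek : e k = fourierBasis (T := 2 * Real.pi) k := by
      have := congrFun (coe_fourierBasis (T := 2 * Real.pi)) k
      exact this.symm
    rw [hek, ← HilbertBasis.repr_apply_apply, fourierBasis_repr]
  have norm_e0 : ‖e 0‖ = 1 := orthonormal_fourier.1 0
  have hP0 : ∀ w : Hplus, P0 w = (inner ℂ (eplus 0) w : ℂ) • eplus 0 := by
    intro w
    have hn : ‖eplus 0‖ = 1 := norm_e0
    have hsing := Submodule.starProjection_singleton ℂ (v := eplus 0) w
    calc P0 w = (ℂ ∙ eplus 0).starProjection w := rfl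
      _ = (inner ℂ (eplus 0) w : ℂ) • eplus 0 := by
          rw [hsing, hn]
          norm_num
  have hTcoeff : ∀ (Mop : H →L[ℂ] H) (Q : AddCircle (2 * Real.pi) → ℂ),
      Continuous Q → ∀ (q : ℝ → ℂ), (∀ θ : ℝ, Q (θ : AddCircle (2 * Real.pi)) = q θ) →
      IsMulOp q Mop → ∀ n : ℕ,
      (inner ℂ (eplus 0) (Toep Mop (eplus n)) : ℂ) = fourierCoeff Q (-(n : ℤ)) := by
    intro Mop Q hQc q hQq hM n
    have h1 : (inner ℂ (eplus 0) (Toep Mop (eplus n)) : ℂ)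
        = (inner ℂ (e 0) (Mop (e n)) : ℂ) := by
      have : Toep Mop (eplus n) = Hplus.orthogonalProjectionOnto (Mop (e n)) := rfl
      rw [this]
      exact Submodule.inner_orthogonalProjectionOnto_eq_of_mem_left (K := Hplus) (eplus 0) (Mop (e (n : ℤ)))
    rw [h1, inner_e 0 (Mop (e n))]
    have hae := CKaux.mulOp_ae hQc hQq hM (e n)
    have hae2 : (⇑(Mop (e n)) : AddCircle (2 * Real.pi) → ℂ)
        =ᵐ[AddCircle.haarAddCircle] fun y => Q y * fourier n y := by
      have hfn : (⇑(e n) : AddCircle (2 * Real.pi) → ℂ)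
          =ᵐ[AddCircle.haarAddCircle] ⇑(fourier (n : ℤ)) := coeFn_fourierLp 2 n
      filter_upwards [hae, hfn] with y hy1 hy2
      rw [hy1, hy2]
    rw [CKaux.fourierCoeff_congr' hae2, CKaux.fourierCoeff_mul_fourier]
    norm_num
  constructor
  · -- part (a)
    intro n hn
    have h1 := hTcoeff MAinv Qf hQfC _ hQfq hMAinv n
    have h2 : fourierCoeff Qf (-(n : ℤ)) = 0 := by
      apply hfneg'
      have : (0 : ℤ) < (n : ℤ) := by exact_mod_cast hn
      omega
    have h3 : P0 (Toep MAinv (eplus n)) = 0 := by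
      rw [hP0, h1, h2, zero_smul]
    rw [hA]
    simp only [ContinuousLinearMap.sub_apply, ContinuousLinearMap.comp_apply]
    rw [h3, map_zero, sub_zero]
  · -- part (b)
    have h1 := hTcoeff MAinv Qf hQfC _ hQfq hMAinv 0
    have h2 := hTcoeff MA Qg hQgC _ hQgq hMA 0
    have h1' : (inner ℂ (eplus 0) (Toep MAinv (eplus 0)) : ℂ) = Complex.exp (-fc α 0) := by
      rw [h1]
      norm_num
      exact hf0'
    have h2' : (inner ℂ (eplus 0) (Toep MA (eplus 0)) : ℂ) = Complex.exp (fc α 0) := by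
      rw [h2]
      norm_num
      exact hg0'
    have hself : (inner ℂ (eplus 0) (eplus 0) : ℂ) = 1 := by
      rw [inner_self_eq_norm_sq_to_K (𝕜 := ℂ) (eplus 0)]
      rw [show ‖eplus 0‖ = 1 from norm_e0]
      norm_num
    have hw : P0 (Toep MAinv (eplus 0)) = Complex.exp (-fc α 0) • eplus 0 := by
      rw [hP0, h1']
    rw [hA]
    simp only [ContinuousLinearMap.sub_apply, ContinuousLinearMap.comp_apply,
      inner_sub_right]
    rw [hw, ContinuousLinearMap.map_smul, inner_smul_right, inner_smul_right (eplus 0) (eplus 0), hself, h2', mul_one]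
    have hee : Complex.exp (-fc α 0) * Complex.exp (fc α 0) = 1 := by
      rw [← Complex.exp_add]
      simp
    rw [hee]
    ring


end
end
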